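/- In the setup below, the group Φ = {φ_ξ : ξ ∈ F \ {0}} acts transitively on the idempotents of J other than 0 and 1_J: for any u, v ∈ J with u·u = u, v·v = v, u ∉ {0, 1_J} and v ∉ {0, 1_J}, there exists ξ ∈ F \ {0} with φ_ξ(u) = v. -/

import Mathlib

namespace JordanHalf

variable {F : Type*} [Field F] {A : Type*} [AddCommGroup A] [Module F A]

/-- The `lam`-eigenspace of the adjoint map `ad_a` for the bilinear multiplication `mul`. -/
def eig (mul : A →ₗ[F] A →ₗ[F] A) (a : A) (lam : F) : Submodule F A :=
  Module.End.eigenspace (mul a) lam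

/-- `a` is a primitive axis of Jordan type `1/2` for the multiplication `mul`. -/
def IsPrimitiveAxis (mul : A →ₗ[F] A →ₗ[F] A) (a : A) : Prop :=
  mul a a = a ∧
  (eig mul a 1 ⊔ eig mul a 0 ⊔ eig mul a (2⁻¹ : F) = ⊤) ∧
  eig mul a 1 = Submodule.span F {a} ∧
  (∀ x ∈ eig mul a 1, ∀ y ∈ eig mul a 0, mul x y = 0) ∧
  (∀ x ∈ eig mul a 0, ∀ y ∈ eig mul a 0, mul x y ∈ eig mul a 0) ∧
  (∀ x ∈ eig mul a 1, ∀ y ∈ eig mul a (2⁻¹ : F), mul x y ∈ eig mul a (2⁻¹ : F)) ∧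
  (∀ x ∈ eig mul a 0, ∀ y ∈ eig mul a (2⁻¹ : F), mul x y ∈ eig mul a (2⁻¹ : F)) ∧
  (∀ x ∈ eig mul a (2⁻¹ : F), ∀ y ∈ eig mul a (2⁻¹ : F),
    mul x y ∈ eig mul a 1 ⊔ eig mul a 0)

/-- The subalgebra (as a submodule closed under `mul`) generated by a set `S`. -/
def genBy (mul : A →ₗ[F] A →ₗ[F] A) (S : Set A) : Submodule F A :=
  sInf {P : Submodule F A | S ⊆ P ∧ ∀ x ∈ P, ∀ y ∈ P, mul x y ∈ P}

end JordanHalf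

open JordanHalf

/-! The grading forces `s⬝s = 0 = t⬝t` and `s⬝t = c • 1_J`, and `s`, `1_J`, `t`, lying in
distinct homogeneous components, are independent, hence a basis of the 3-dimensional `J`.
Writing an idempotent as `p s + q 1_J + r t`, idempotency gives `q = 1/2` and `8 p r c = 1`.
Since `φ_ξ` multiplies `p` by `ξ⁻²` and `r` by `ξ²`, it moves one such idempotent to another
once `ξ²` is the ratio of their `s`-coefficients, which exists as `F` is algebraically closed. -/

section Scalars

variable {F : Type*} [Field F]

theorem idempotent_coeffs_eq {p q r c : F} (hp : 2 * p * q = p) (hq : q ^ 2 + 2 * p * r * c = q)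
    (hr : 2 * q * r = r) (h0 : ¬(p = 0 ∧ q = 0 ∧ r = 0)) (h1 : ¬(p = 0 ∧ q = 1 ∧ r = 0)) :
    2 * q = 1 ∧ 8 * (p * r * c) = 1 := by
  have hp0 : p ≠ 0 := by
    rintro rfl
    have hq01 : q * (q - 1) = 0 := by linear_combination hq
    rcases mul_eq_zero.1 hq01 with rfl | hq1
    · exact h0 ⟨rfl, rfl, by linear_combination -hr⟩
    · exact h1 ⟨rfl, by linear_combination hq1, by linear_combination hr - 2 * r * hq1⟩
  have h2q : 2 * q = 1 := by
    have : p * (2 * q - 1) = 0 := by linear_combination hp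
    linear_combination (mul_eq_zero.1 this).resolve_left hp0
  exact ⟨h2q, by linear_combination 4 * hq - (2 * q - 1) * h2q⟩

theorem exists_zpow_two_rescale [IsAlgClosed F] {p r p' r' c : F} (h : 8 * (p * r * c) = 1)
    (h' : 8 * (p' * r' * c) = 1) :
    ∃ ξ : F, ξ ≠ 0 ∧ p * ξ ^ (-2 : ℤ) = p' ∧ r * ξ ^ (2 : ℤ) = r' := by
  have hp : p ≠ 0 := left_ne_zero_of_mul (left_ne_zero_of_mul (right_ne_zero_of_mul_eq_one h))
  have hp' : p' ≠ 0 :=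
    left_ne_zero_of_mul (left_ne_zero_of_mul (right_ne_zero_of_mul_eq_one h'))
  have hc : c ≠ 0 := right_ne_zero_of_mul (right_ne_zero_of_mul_eq_one h)
  obtain ⟨ξ, hξ⟩ := IsAlgClosed.exists_pow_nat_eq (p / p') two_pos
  have hξ0 : ξ ≠ 0 := by
    rintro rfl
    exact div_ne_zero hp hp' (by simpa using hξ.symm)
  refine ⟨ξ, hξ0, ?_, ?_⟩
  · rw [zpow_neg, zpow_ofNat, hξ]
    field_simp
  · rw [zpow_ofNat, hξ]
    field_simp
    exact mul_right_cancel₀ hc (by linear_combination (p' * r' * c) * h - (p * r * c) * h')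

end Scalars

section

variable {F : Type*} [Field F] {A : Type*} [AddCommGroup A] [Module F A]

theorem JordanHalf.mul_mem_genBy {mul : A →ₗ[F] A →ₗ[F] A} {S : Set A} {x y : A}
    (hx : x ∈ genBy mul S) (hy : y ∈ genBy mul S) : mul x y ∈ genBy mul S :=
  Submodule.mem_sInf.2 fun _ hP =>
    hP.2 x (Submodule.mem_sInf.1 hx _ hP) y (Submodule.mem_sInf.1 hy _ hP)

theorem LinearIndependent.eq_of_smul_add_smul_add_smul_eq {x y z : A}
    (h : LinearIndependent F ![x, y, z]) {a b c a' b' c' : F}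
    (he : a • x + b • y + c • z = a' • x + b' • y + c' • z) :
    a = a' ∧ b = b' ∧ c = c' := by
  have := Fintype.linearIndependent_iffₛ.1 h ![a, b, c] ![a', b', c']
    (by simpa [Fin.sum_univ_three, add_assoc] using he)
  exact ⟨this 0, this 1, this 2⟩

theorem LinearIndependent.smul_add_add_smul_ne_zero {x y z : A}
    (h : LinearIndependent F ![x, y, z]) {k : F} (hk : k ≠ 0) (μ ν : F) :
    k • (μ • x + z + ν • y) ≠ 0 := by
  refine smul_ne_zero hk fun h0 => one_ne_zero (h.eq_of_smul_add_smul_add_smul_eq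
    (a := μ) (b := ν) (c' := 0) (a' := 0) (b' := 0) ?_).2.2
  rw [← sub_eq_zero, ← h0]
  module

theorem span_triple_eq_of_le {x y z x' y' z' : A} (h : LinearIndependent F ![x, y, z])
    (h' : LinearIndependent F ![x', y', z'])
    (hle : Submodule.span F {x, y, z} ≤ Submodule.span F {x', y', z'}) :
    Submodule.span F {x, y, z} = Submodule.span F {x', y', z'} := by
  have hrange (u v w : A) : Set.range ![u, v, w] = {u, v, w} := by
    rw [Matrix.range_cons, Matrix.range_cons_cons_empty, Set.singleton_union]
  have := FiniteDimensional.span_of_finite F (Set.toFinite {x', y', z'})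
  refine Submodule.eq_of_le_of_finrank_eq hle ?_
  rw [← hrange, ← hrange, finrank_span_eq_card h, finrank_span_eq_card h']

theorem idempotent_coeffs_eq_of_mul_self_eq {mul : A →ₗ[F] A →ₗ[F] A}
    (hcomm : ∀ u v : A, mul u v = mul v u) {s e t : A} {c : F}
    (hind : LinearIndependent F ![s, e, t]) (hss : mul s s = 0) (htt : mul t t = 0)
    (hst : mul s t = c • e) (hes : mul e s = s) (het : mul e t = t) (hee : mul e e = e)
    {x : A} (hidem : mul x x = x) (h0 : x ≠ 0) (h1 : x ≠ e) {p q r : F}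
    (hx : p • s + q • e + r • t = x) :
    2 * q = 1 ∧ 8 * (p * r * c) = 1 := by
  subst hx
  have hsq : mul (p • s + q • e + r • t) (p • s + q • e + r • t) =
      (2 * p * q) • s + (q ^ 2 + 2 * p * r * c) • e + (2 * q * r) • t := by
    simp only [map_add, map_smul, LinearMap.add_apply, LinearMap.smul_apply, hss, htt, hst,
      hcomm t s, hcomm s e, hcomm t e, hes, het, hee, smul_zero]
    module
  obtain ⟨hp, hq, hr⟩ := hind.eq_of_smul_add_smul_add_smul_eq (hsq.symm.trans hidem)
  refine idempotent_coeffs_eq hp hq hr ?_ ?_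
  · rintro ⟨rfl, rfl, rfl⟩
    simp at h0
  · rintro ⟨rfl, rfl, rfl⟩
    simp at h1

def IsGradedScaling (g : ℤ → Submodule F A) (ξ : F) (φ : A →ₗ[F] A) : Prop :=
  ∀ n : ℤ, ∀ x ∈ g n, φ x = ξ ^ n • x

variable {g : ℤ → Submodule F A}

theorem isInternal_of_five_components (hbot : ∀ n, n ∉ Finset.Icc (-2 : ℤ) 2 → g n = ⊥)
    (hgsum : ∀ u : A, ∃ xm2 ∈ g (-2), ∃ xm1 ∈ g (-1), ∃ x0 ∈ g 0, ∃ x1 ∈ g 1,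
      ∃ x2 ∈ g 2, u = xm2 + xm1 + x0 + x1 + x2)
    (hgind : ∀ xm2 ∈ g (-2), ∀ xm1 ∈ g (-1), ∀ x0 ∈ g 0, ∀ x1 ∈ g 1, ∀ x2 ∈ g 2,
      xm2 + xm1 + x0 + x1 + x2 = 0 →
        xm2 = 0 ∧ xm1 = 0 ∧ x0 = 0 ∧ x1 = 0 ∧ x2 = 0) :
    DirectSum.IsInternal g := by
  classical
  refine ⟨?_, fun u => ?_⟩
  · rw [injective_iff_map_eq_zero]
    intro x hx
    have hsupp : x = ∑ n ∈ Finset.Icc (-2 : ℤ) 2, DirectSum.of (fun n => g n) n (x n) := by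
      refine DFinsupp.ext fun n => ?_
      by_cases hn : n ∈ Finset.Icc (-2 : ℤ) 2
      · simp [DirectSum.of_apply, hn]
      · simpa [DirectSum.of_apply, hn] using
          Subtype.ext ((Submodule.eq_bot_iff _).1 (hbot n hn) _ (x n).2)
    have hIcc : Finset.Icc (-2 : ℤ) 2 = {-2, -1, 0, 1, 2} := by decide
    have hsum : (x (-2) : A) + x (-1) + x 0 + x 1 + x 2 = 0 := by
      rw [← hx]
      conv_rhs => rw [hsupp, hIcc]
      simp [add_assoc]
    obtain ⟨h₁, h₂, h₃, h₄, h₅⟩ :=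
      hgind _ (x (-2)).2 _ (x (-1)).2 _ (x 0).2 _ (x 1).2 _ (x 2).2 hsum
    simp only [ZeroMemClass.coe_eq_zero] at h₁ h₂ h₃ h₄ h₅
    rw [hsupp, hIcc]
    simp [h₁, h₂, h₃, h₄, h₅]
  · obtain ⟨xm2, hm2, xm1, hm1, x0, h0, x1, h1, x2, h2, rfl⟩ := hgsum u
    exact ⟨DirectSum.of (fun n => g n) (-2) ⟨xm2, hm2⟩ + DirectSum.of _ (-1) ⟨xm1, hm1⟩ +
      DirectSum.of _ 0 ⟨x0, h0⟩ + DirectSum.of _ 1 ⟨x1, h1⟩ + DirectSum.of _ 2 ⟨x2, h2⟩,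
      by simp only [map_add, DirectSum.coeAddMonoidHom_of]⟩

theorem DirectSum.IsInternal.exists_isGradedScaling (h : DirectSum.IsInternal g) (ξ : F) :
    ∃ φ : A →ₗ[F] A, IsGradedScaling g ξ φ := by
  classical
  let e := LinearEquiv.ofBijective (DirectSum.coeLinearMap g) h
  refine ⟨DirectSum.toModule F ℤ A (fun n => ξ ^ n • (g n).subtype) ∘ₗ e.symm,
    fun n x hx => ?_⟩
  have he : e.symm x = DirectSum.lof F ℤ (fun n => g n) n ⟨x, hx⟩ :=
    e.symm_apply_eq.mpr (DirectSum.coeLinearMap_of g n ⟨x, hx⟩).symm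
  simp [he, DirectSum.toModule_lof]

theorem linearIndependent_of_mem_neg_two_zero_two
    (hgind : ∀ xm2 ∈ g (-2), ∀ xm1 ∈ g (-1), ∀ x0 ∈ g 0, ∀ x1 ∈ g 1, ∀ x2 ∈ g 2,
      xm2 + xm1 + x0 + x1 + x2 = 0 →
        xm2 = 0 ∧ xm1 = 0 ∧ x0 = 0 ∧ x1 = 0 ∧ x2 = 0)
    {x y z : A} (hx : x ∈ g (-2)) (hy : y ∈ g 0) (hz : z ∈ g 2)
    (hx0 : x ≠ 0) (hy0 : y ≠ 0) (hz0 : z ≠ 0) : LinearIndependent F ![x, y, z] := by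
  refine Fintype.linearIndependent_iff.2 fun k hk i => ?_
  obtain ⟨h₁, -, h₃, -, h₅⟩ := hgind _ (Submodule.smul_mem _ (k 0) hx) 0 (zero_mem _)
    _ (Submodule.smul_mem _ (k 1) hy) 0 (zero_mem _) _ (Submodule.smul_mem _ (k 2) hz)
    (by simpa [Fin.sum_univ_three] using hk)
  fin_cases i
  · exact (smul_eq_zero.1 h₁).resolve_right hx0
  · exact (smul_eq_zero.1 h₃).resolve_right hy0
  · exact (smul_eq_zero.1 h₅).resolve_right hz0

theorem eq_smul_of_mem_zero
    (hgind : ∀ xm2 ∈ g (-2), ∀ xm1 ∈ g (-1), ∀ x0 ∈ g 0, ∀ x1 ∈ g 1, ∀ x2 ∈ g 2,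
      xm2 + xm1 + x0 + x1 + x2 = 0 →
        xm2 = 0 ∧ xm1 = 0 ∧ x0 = 0 ∧ x1 = 0 ∧ x2 = 0)
    {s e t x : A} (hs : s ∈ g (-2)) (he : e ∈ g 0) (ht : t ∈ g 2) (hx : x ∈ g 0)
    {σ c τ : F} (hxd : σ • s + c • e + τ • t = x) : x = c • e := by
  obtain ⟨-, -, h₀, -, -⟩ := hgind _ (Submodule.smul_mem _ σ hs) 0 (zero_mem _) _
    (sub_mem (Submodule.smul_mem _ c he) hx) 0 (zero_mem _) _ (Submodule.smul_mem _ τ ht)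
    (by rw [← hxd]; abel)
  exact (sub_eq_zero.1 h₀).symm

theorem exists_isGradedScaling_apply_eq [IsAlgClosed F] {mul : A →ₗ[F] A →ₗ[F] A}
    (hcomm : ∀ u v : A, mul u v = mul v u)
    (hbot : ∀ n, n ∉ Finset.Icc (-2 : ℤ) 2 → g n = ⊥)
    (hgsum : ∀ u : A, ∃ xm2 ∈ g (-2), ∃ xm1 ∈ g (-1), ∃ x0 ∈ g 0, ∃ x1 ∈ g 1,
      ∃ x2 ∈ g 2, u = xm2 + xm1 + x0 + x1 + x2)
    (hgind : ∀ xm2 ∈ g (-2), ∀ xm1 ∈ g (-1), ∀ x0 ∈ g 0, ∀ x1 ∈ g 1, ∀ x2 ∈ g 2,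
      xm2 + xm1 + x0 + x1 + x2 = 0 →
        xm2 = 0 ∧ xm1 = 0 ∧ x0 = 0 ∧ x1 = 0 ∧ x2 = 0)
    (hgmul : ∀ n m : ℤ, ∀ x ∈ g n, ∀ y ∈ g m, mul x y ∈ g (n + m))
    {s e t : A} (hs : s ∈ g (-2)) (he : e ∈ g 0) (ht : t ∈ g 2)
    (hind : LinearIndependent F ![s, e, t])
    (hes : mul e s = s) (het : mul e t = t) (hee : mul e e = e)
    (hst : mul s t ∈ Submodule.span F {s, e, t}) {u v : A}
    (hu : u ∈ Submodule.span F {s, e, t}) (hv : v ∈ Submodule.span F {s, e, t})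
    (huu : mul u u = u) (hvv : mul v v = v) (hu0 : u ≠ 0) (hue : u ≠ e) (hv0 : v ≠ 0)
    (hve : v ≠ e) :
    ∃ ξ : F, ξ ≠ 0 ∧ ∃ φ : A →ₗ[F] A, IsGradedScaling g ξ φ ∧ φ u = v := by
  have hmul_zero {n m : ℤ} (hnm : n + m ∉ Finset.Icc (-2 : ℤ) 2) {x y : A} (hx : x ∈ g n)
      (hy : y ∈ g m) : mul x y = 0 :=
    (Submodule.eq_bot_iff _).1 (hbot _ hnm) _ (hgmul n m x hx y hy)
  have hss : mul s s = 0 := hmul_zero (by decide) hs hs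
  have htt : mul t t = 0 := hmul_zero (by decide) ht ht
  obtain ⟨σ, c, τ, hstd⟩ := Submodule.mem_span_triple.1 hst
  have hst' : mul s t = c • e :=
    eq_smul_of_mem_zero hgind hs he ht (by simpa using hgmul _ _ s hs t ht) hstd
  obtain ⟨p, q, r, hud⟩ := Submodule.mem_span_triple.1 hu
  obtain ⟨p', q', r', hvd⟩ := Submodule.mem_span_triple.1 hv
  obtain ⟨hq, hprc⟩ :=
    idempotent_coeffs_eq_of_mul_self_eq hcomm hind hss htt hst' hes het hee huu hu0 hue hud
  obtain ⟨hq', hprc'⟩ :=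
    idempotent_coeffs_eq_of_mul_self_eq hcomm hind hss htt hst' hes het hee hvv hv0 hve hvd
  obtain ⟨ξ, hξ, hp, hr⟩ := exists_zpow_two_rescale hprc hprc'
  obtain ⟨φ, hφ⟩ := (isInternal_of_five_components hbot hgsum hgind).exists_isGradedScaling ξ
  refine ⟨ξ, hξ, φ, hφ, ?_⟩
  rw [← hud, ← hvd, map_add, map_add, map_smul, map_smul, map_smul, hφ _ s hs, hφ _ e he,
    hφ _ t ht, zpow_zero, one_smul, smul_smul, smul_smul, hp, hr,
    show q = q' by linear_combination q' * hq - q * hq']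

end

theorem Phi_transitive_on_idempotents_general
    {F : Type*} [Field F] [IsAlgClosed F] (hchar : (2 : F) ≠ 0)
    {A : Type*} [AddCommGroup A] [Module F A]
    (mul : A →ₗ[F] A →ₗ[F] A) (hcomm : ∀ u v : A, mul u v = mul v u)
    (B : A →ₗ[F] A →ₗ[F] F)
    (a b : A)
    (hα0 : B a b ≠ 0) (hα1 : B a b ≠ 1)
    -- the subalgebra `J = ⟨⟨a,b⟩⟩` is 3-dimensional with basis `a, b, a⬝b`,
    -- has an identity element `oneJ`, and the Frobenius form is nondegenerate on it
    (hJspan : genBy mul {a, b} = Submodule.span F {a, b, mul a b})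
    (hJind : LinearIndependent F ![a, b, mul a b])
    (oneJ : A) (honeJ : oneJ ∈ genBy mul {a, b})
    (honemul : ∀ x ∈ genBy mul {a, b}, mul oneJ x = x)
    -- `ζ` is a root of `x² − (4α−2)x + 1` and `s`, `t` are the nilpotent elements of `J`
    (ζ : F)
    (s t : A)
    (hs : s = (4 * (B a b - 1))⁻¹ •
      ((-(1 + ζ) / 4) • a + mul a b + (-(1 + ζ⁻¹) / 4) • b))
    (ht : t = (B a b * (B a b - 1))⁻¹ •
      ((-(1 + ζ⁻¹) / 4) • a + mul a b + (-(1 + ζ) / 4) • b))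
    -- `W = J^⊥`, so that `A = J ⊕ W` and `W⬝J ⊆ W`
    (W : Submodule F A)
    -- the grading of `A`
    (g : ℤ → Submodule F A)
    (hg : ∀ k : ℤ, g k =
      if k = -2 then Submodule.span F {s}
      else if k = -1 then Submodule.map (mul s) W
      else if k = 0 then Submodule.span F {oneJ} ⊔
        (W ⊓ LinearMap.ker (mul s) ⊓ LinearMap.ker (mul t))
      else if k = 1 then Submodule.map (mul t) W
      else if k = 2 then Submodule.span F {t}
      else ⊥)
    -- \`A\` is the internal direct sum of the graded components, and the grading is
    -- multiplicative
    (hgsum : ∀ u : A, ∃ xm2 ∈ g (-2), ∃ xm1 ∈ g (-1), ∃ x0 ∈ g 0, ∃ x1 ∈ g 1,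
      ∃ x2 ∈ g 2, u = xm2 + xm1 + x0 + x1 + x2)
    (hgind : ∀ xm2 ∈ g (-2), ∀ xm1 ∈ g (-1), ∀ x0 ∈ g 0, ∀ x1 ∈ g 1, ∀ x2 ∈ g 2,
      xm2 + xm1 + x0 + x1 + x2 = 0 →
        xm2 = 0 ∧ xm1 = 0 ∧ x0 = 0 ∧ x1 = 0 ∧ x2 = 0)
    (hgmul : ∀ n m : ℤ, ∀ x ∈ g n, ∀ y ∈ g m, mul x y ∈ g (n + m)) :
    ∀ u ∈ genBy mul {a, b}, ∀ v ∈ genBy mul {a, b},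
      mul u u = u → mul v v = v → u ≠ 0 → u ≠ oneJ → v ≠ 0 → v ≠ oneJ →
      ∃ ξ : F, ξ ≠ 0 ∧ ∃ φ : A →ₗ[F] A,
        (∀ n : ℤ, ∀ x ∈ g n, φ x = ξ ^ n • x) ∧ φ u = v := by
  intro u hu v hv huu hvv hu0 hue hv0 hve
  have hbot : ∀ n, n ∉ Finset.Icc (-2 : ℤ) 2 → g n = ⊥ := fun n hn => by
    rw [Finset.mem_Icc] at hn
    rw [hg]
    split_ifs <;> first | omega | rfl
  have hsg : s ∈ g (-2) := by simp [hg]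
  have heg : oneJ ∈ g 0 := by
    simpa [hg] using Submodule.mem_sup_left (Submodule.mem_span_singleton_self oneJ)
  have htg : t ∈ g 2 := by simp [hg]
  have h4 : (4 : F) ≠ 0 := (by norm_num : (2 : F) * 2 = 4) ▸ mul_ne_zero hchar hchar
  have hs0 : s ≠ 0 := hs ▸ hJind.smul_add_add_smul_ne_zero
    (inv_ne_zero (mul_ne_zero h4 (sub_ne_zero.2 hα1))) _ _
  have ht0 : t ≠ 0 := ht ▸ hJind.smul_add_add_smul_ne_zero
    (inv_ne_zero (mul_ne_zero hα0 (sub_ne_zero.2 hα1))) _ _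
  have hJ3 (k μ ν : F) : k • (μ • a + mul a b + ν • b) ∈ genBy mul {a, b} := by
    rw [hJspan, Submodule.mem_span_triple]
    exact ⟨k * μ, k * ν, k, by module⟩
  have hsJ : s ∈ genBy mul {a, b} := hs ▸ hJ3 _ _ _
  have htJ : t ∈ genBy mul {a, b} := ht ▸ hJ3 _ _ _
  have he0 : oneJ ≠ 0 := fun h => hs0 (by rw [← honemul s hsJ, h, map_zero,
    LinearMap.zero_apply])
  have hind := linearIndependent_of_mem_neg_two_zero_two hgind hsg heg htg hs0 he0 ht0
  have hJ : genBy mul {a, b} = Submodule.span F {s, oneJ, t} := by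
    rw [hJspan] at hsJ htJ honeJ ⊢
    refine (span_triple_eq_of_le hind hJind (Submodule.span_le.2 ?_)).symm
    simp [Set.insert_subset_iff, hsJ, htJ, honeJ]
  exact exists_isGradedScaling_apply_eq hcomm hbot hgsum hgind hgmul hsg heg htg hind
    (honemul s hsJ) (honemul t htJ) (honemul oneJ honeJ) (hJ ▸ mul_mem_genBy hsJ htJ)
    (hJ ▸ hu) (hJ ▸ hv) huu hvv hu0 hue hv0 hve

/-- **Proposition (transitivity).** In the setup of Section 5 of the paper, the group
`Φ = {φ_ξ : ξ ∈ F \ {0}}` of graded automorphisms acts transitively on the idempotents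
of `J = ⟨⟨a,b⟩⟩` other than `0` and `1_J`. -/
theorem Phi_transitive_on_idempotents
    {F : Type*} [Field F] [IsAlgClosed F] (hchar : (2 : F) ≠ 0)
    {A : Type*} [AddCommGroup A] [Module F A]
    (mul : A →ₗ[F] A →ₗ[F] A) (hcomm : ∀ u v : A, mul u v = mul v u)
    (hgen : ∃ X : Set A, (∀ x ∈ X, IsPrimitiveAxis mul x) ∧ genBy mul X = ⊤)
    (B : A →ₗ[F] A →ₗ[F] F) (hBne : B ≠ 0)
    (hBsymm : ∀ u v : A, B u v = B v u)
    (hBfrob : ∀ u v w : A, B (mul u v) w = B u (mul v w))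
    (hBnorm : ∀ c : A, IsPrimitiveAxis mul c → B c c = 1)
    (a b : A) (ha : IsPrimitiveAxis mul a) (hb : IsPrimitiveAxis mul b)
    (hα0 : B a b ≠ 0) (hα14 : B a b ≠ (4⁻¹ : F)) (hα1 : B a b ≠ 1)
    -- the subalgebra `J = ⟨⟨a,b⟩⟩` is 3-dimensional with basis `a, b, a⬝b`,
    -- has an identity element `oneJ`, and the Frobenius form is nondegenerate on it
    (hJspan : genBy mul {a, b} = Submodule.span F {a, b, mul a b})
    (hJind : LinearIndependent F ![a, b, mul a b])
    (oneJ : A) (honeJ : oneJ ∈ genBy mul {a, b})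
    (honemul : ∀ x ∈ genBy mul {a, b}, mul oneJ x = x)
    (hnondeg : ∀ x ∈ genBy mul {a, b}, (∀ y ∈ genBy mul {a, b}, B x y = 0) → x = 0)
    -- `ζ` is a root of `x² − (4α−2)x + 1` and `s`, `t` are the nilpotent elements of `J`
    (ζ : F) (hζ : ζ ^ 2 - (4 * B a b - 2) * ζ + 1 = 0)
    (s t : A)
    (hs : s = (4 * (B a b - 1))⁻¹ •
      ((-(1 + ζ) / 4) • a + mul a b + (-(1 + ζ⁻¹) / 4) • b))
    (ht : t = (B a b * (B a b - 1))⁻¹ •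
      ((-(1 + ζ⁻¹) / 4) • a + mul a b + (-(1 + ζ) / 4) • b))
    -- `W = J^⊥`, so that `A = J ⊕ W` and `W⬝J ⊆ W`
    (W : Submodule F A) (hW : ∀ w : A, w ∈ W ↔ ∀ x ∈ genBy mul {a, b}, B w x = 0)
    (hcompl : IsCompl (genBy mul {a, b}) W)
    (hWJ : ∀ w ∈ W, ∀ x ∈ genBy mul {a, b}, mul w x ∈ W)
    -- the Miyamoto involutions `τa`, `τb` of the axes `a`, `b`
    (τa : A →ₗ[F] A)
    (hτa1 : ∀ x ∈ eig mul a 1, τa x = x) (hτa0 : ∀ x ∈ eig mul a 0, τa x = x)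
    (hτah : ∀ x ∈ eig mul a (2⁻¹ : F), τa x = -x)
    (hτamul : ∀ u v : A, τa (mul u v) = mul (τa u) (τa v))
    (τb : A →ₗ[F] A)
    (hτb1 : ∀ x ∈ eig mul b 1, τb x = x) (hτb0 : ∀ x ∈ eig mul b 0, τb x = x)
    (hτbh : ∀ x ∈ eig mul b (2⁻¹ : F), τb x = -x)
    (hτbmul : ∀ u v : A, τb (mul u v) = mul (τb u) (τb v))
    -- the grading of `A`
    (g : ℤ → Submodule F A)
    (hg : ∀ k : ℤ, g k =
      if k = -2 then Submodule.span F {s}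
      else if k = -1 then Submodule.map (mul s) W
      else if k = 0 then Submodule.span F {oneJ} ⊔
        (W ⊓ LinearMap.ker (mul s) ⊓ LinearMap.ker (mul t))
      else if k = 1 then Submodule.map (mul t) W
      else if k = 2 then Submodule.span F {t}
      else ⊥)
    -- \`A\` is the internal direct sum of the graded components, and the grading is
    -- multiplicative
    (hgsum : ∀ u : A, ∃ xm2 ∈ g (-2), ∃ xm1 ∈ g (-1), ∃ x0 ∈ g 0, ∃ x1 ∈ g 1,
      ∃ x2 ∈ g 2, u = xm2 + xm1 + x0 + x1 + x2)
    (hgind : ∀ xm2 ∈ g (-2), ∀ xm1 ∈ g (-1), ∀ x0 ∈ g 0, ∀ x1 ∈ g 1, ∀ x2 ∈ g 2,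
      xm2 + xm1 + x0 + x1 + x2 = 0 →
        xm2 = 0 ∧ xm1 = 0 ∧ x0 = 0 ∧ x1 = 0 ∧ x2 = 0)
    (hgmul : ∀ n m : ℤ, ∀ x ∈ g n, ∀ y ∈ g m, mul x y ∈ g (n + m)) :
    ∀ u ∈ genBy mul {a, b}, ∀ v ∈ genBy mul {a, b},
      mul u u = u → mul v v = v → u ≠ 0 → u ≠ oneJ → v ≠ 0 → v ≠ oneJ →
      ∃ ξ : F, ξ ≠ 0 ∧ ∃ φ : A →ₗ[F] A,
        (∀ n : ℤ, ∀ x ∈ g n, φ x = ξ ^ n • x) ∧ φ u = v :=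
  Phi_transitive_on_idempotents_general hchar mul hcomm B a b hα0 hα1 hJspan hJind oneJ honeJ
    honemul ζ s t hs ht W g hg hgsum hgind hgmul
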